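/- Let ρ ∈ (−1, 1) and let f : ℝ² → ℝ be the bivariate Gaussian density f(a, b) = (2π√(1 − ρ²))⁻¹ · exp(−(a² − 2ρab + b²)/(2(1 − ρ²))). Then the orthant probability satisfies ∫_{0}^{∞}∫_{0}^{∞} f(a, b) da db = 1/4 + arcsin(ρ)/(2π). -/

import Mathlib

/-!
Whitening: the substitution `b = ρ a + √(1 - ρ²) y` turns `f` into the standard Gaussian density
on `ℝ²` and the positive quadrant into the sector `{a > 0, ρ a + √(1 - ρ²) y > 0}`. Writing
`ρ = sin φ` with `φ = arcsin ρ`, this sector is `-φ < θ < π/2` in polar coordinates. The standard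
Gaussian is rotation invariant, so the mass of a sector is its opening angle `π/2 + φ` over `2π`.
-/

open Real Set MeasureTheory

noncomputable section

lemma cos_pos_iff_mem_Ioo_of_mem_Ioo {θ : ℝ} (hθ : θ ∈ Ioo (-π) π) :
    0 < cos θ ↔ θ ∈ Ioo (-(π / 2)) (π / 2) := by
  refine ⟨fun h => ⟨?_, ?_⟩, cos_pos_of_mem_Ioo⟩
  · by_contra! hle
    have := cos_nonpos_of_pi_div_two_le_of_le (x := -θ) (by linarith) (by linarith [hθ.1])
    rw [cos_neg] at this
    linarith
  · by_contra! hge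
    linarith [cos_nonpos_of_pi_div_two_le_of_le hge (by linarith [hθ.2])]

lemma sin_pos_iff_pos_of_mem_Ioo {θ : ℝ} (hθ : θ ∈ Ioo (-π) π) : 0 < sin θ ↔ 0 < θ :=
  ⟨fun h => by
    by_contra! hle
    linarith [sin_nonpos_of_nonpos_of_neg_pi_le hle hθ.1.le],
   fun h => sin_pos_of_pos_of_lt_pi h hθ.2⟩

def stdGaussianPlanePDF (p : ℝ × ℝ) : ℝ := (2 * π)⁻¹ * exp (-(p.1 ^ 2 + p.2 ^ 2) / 2)

def wedge (φ : ℝ) : Set (ℝ × ℝ) := {p | 0 < p.1 ∧ 0 < sin φ * p.1 + cos φ * p.2}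

lemma isOpen_wedge (φ : ℝ) : IsOpen (wedge φ) :=
  (isOpen_lt continuous_const continuous_fst).inter (isOpen_lt continuous_const
    (by fun_prop : Continuous fun p : ℝ × ℝ => sin φ * p.1 + cos φ * p.2))

lemma polarCoord_symm_mem_wedge_iff {φ : ℝ} (hφ : φ ∈ Ioo (-(π / 2)) (π / 2)) {q : ℝ × ℝ}
    (hq : q ∈ polarCoord.target) : polarCoord.symm q ∈ wedge φ ↔ q.2 ∈ Ioo (-φ) (π / 2) := by
  obtain ⟨r, θ⟩ := q
  obtain ⟨hr, hθ⟩ : 0 < r ∧ θ ∈ Ioo (-π) π := by simpa using hq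
  have hsum : sin φ * (r * cos θ) + cos φ * (r * sin θ) = r * sin (θ + φ) := by
    rw [sin_add]; ring
  simp only [wedge, polarCoord_symm_apply, mem_ofPred_eq, hsum, mul_pos_iff_of_pos_left hr,
    cos_pos_iff_mem_Ioo_of_mem_Ioo hθ]
  constructor
  · rintro ⟨hθ', hsin⟩
    rw [sin_pos_iff_pos_of_mem_Ioo ⟨by linarith [hθ'.1, hφ.1], by linarith [hθ'.2, hφ.2]⟩]
      at hsin
    exact ⟨by linarith, hθ'.2⟩
  · rintro ⟨h1, h2⟩
    exact ⟨⟨by linarith [hφ.2], h2⟩, sin_pos_of_pos_of_lt_pi (by linarith) (by linarith [hφ.2])⟩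

lemma stdGaussianPlanePDF_polarCoord_symm (q : ℝ × ℝ) :
    stdGaussianPlanePDF (polarCoord.symm q) = (2 * π)⁻¹ * exp (-(1 / 2) * q.1 ^ 2) := by
  have h := sin_sq_add_cos_sq q.2
  simp only [stdGaussianPlanePDF, polarCoord_symm_apply]
  congr 3
  linear_combination (-q.1 ^ 2 / 2) * h

lemma integrable_stdGaussianPlanePDF : Integrable stdGaussianPlanePDF := by
  have h : Integrable fun x : ℝ => exp (-(1 / 2) * x ^ 2) := integrable_exp_neg_mul_sq (by norm_num)
  have hprod : stdGaussianPlanePDF =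
      fun p => (2 * π)⁻¹ * (exp (-(1 / 2) * p.1 ^ 2) * exp (-(1 / 2) * p.2 ^ 2)) := by
    ext p
    rw [stdGaussianPlanePDF, ← exp_add]
    ring_nf
  rw [hprod]
  exact (h.mul_prod h).const_mul _

lemma integral_Ioi_mul_exp_neg_mul_sq {b : ℝ} (hb : 0 < b) :
    ∫ r in Ioi (0 : ℝ), r * exp (-b * r ^ 2) = (2 * b)⁻¹ := by
  apply Complex.ofReal_injective
  rw [← integral_complex_ofReal]
  push_cast
  exact integral_mul_cexp_neg_mul_sq (by simpa using hb)

lemma integral_wedge_stdGaussianPlanePDF {φ : ℝ} (hφ : φ ∈ Ioo (-(π / 2)) (π / 2)) :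
    ∫ p in wedge φ, stdGaussianPlanePDF p = (π / 2 + φ) / (2 * π) := by
  set S : Set (ℝ × ℝ) := Ioi 0 ×ˢ Ioo (-φ) (π / 2)
  have hS : S ⊆ polarCoord.target := by
    rw [polarCoord_target]
    exact prod_mono subset_rfl (Ioo_subset_Ioo (by linarith [hφ.2, pi_pos]) (by linarith [pi_pos]))
  have hpolar : ∀ q ∈ polarCoord.target,
      q.1 • (wedge φ).indicator stdGaussianPlanePDF (polarCoord.symm q) =
        S.indicator (fun q => (2 * π)⁻¹ * (q.1 * exp (-(1 / 2) * q.1 ^ 2))) q := by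
    intro q hq
    by_cases h : q.2 ∈ Ioo (-φ) (π / 2)
    · rw [indicator_of_mem ((polarCoord_symm_mem_wedge_iff hφ hq).2 h),
        indicator_of_mem (show q ∈ S from ⟨hq.1, h⟩), stdGaussianPlanePDF_polarCoord_symm,
        smul_eq_mul]
      ring
    · rw [indicator_of_notMem (mt (polarCoord_symm_mem_wedge_iff hφ hq).1 h),
        indicator_of_notMem (fun h' => h h'.2), smul_zero]
  calc ∫ p in wedge φ, stdGaussianPlanePDF p
      = ∫ q in polarCoord.target,
          q.1 • (wedge φ).indicator stdGaussianPlanePDF (polarCoord.symm q) := by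
        rw [integral_comp_polarCoord_symm, integral_indicator (isOpen_wedge φ).measurableSet]
    _ = ∫ q in S, (2 * π)⁻¹ * (q.1 * exp (-(1 / 2) * q.1 ^ 2)) := by
        rw [setIntegral_congr_fun polarCoord.open_target.measurableSet hpolar,
          setIntegral_indicator (measurableSet_Ioi.prod measurableSet_Ioo), inter_eq_right.2 hS]
    _ = (2 * π)⁻¹ * ((∫ r in Ioi (0 : ℝ), r * exp (-(1 / 2) * r ^ 2)) *
          ∫ _ in Ioo (-φ) (π / 2), (1 : ℝ)) := by
        rw [integral_const_mul, Measure.volume_eq_prod, ← setIntegral_prod_mul]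
        simp only [S, mul_one]
    _ = (π / 2 + φ) / (2 * π) := by
        rw [integral_Ioi_mul_exp_neg_mul_sq (by norm_num), setIntegral_const,
          volume_real_Ioo_of_le (by linarith [hφ.1])]
        rw [smul_eq_mul, mul_one]
        ring

lemma integral_comp_add_mul {E : Type*} [NormedAddCommGroup E] [NormedSpace ℝ E] (F : ℝ → E)
    (c : ℝ) {s : ℝ} (hs : 0 < s) : ∫ y, F (c + s * y) = s⁻¹ • ∫ x, F x := by
  rw [Measure.integral_comp_mul_left (fun x => F (c + x)) s, integral_add_left_eq_self,
    abs_of_pos (inv_pos.2 hs)]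

def bivariateGaussianPDF (ρ a b : ℝ) : ℝ :=
  (2 * π * √(1 - ρ ^ 2))⁻¹ * exp (-(a ^ 2 - 2 * ρ * a * b + b ^ 2) / (2 * (1 - ρ ^ 2)))

lemma bivariateGaussianPDF_whiten {ρ : ℝ} (hρ : ρ ∈ Ioo (-1) 1) (a y : ℝ) :
    √(1 - ρ ^ 2) * bivariateGaussianPDF ρ a (ρ * a + √(1 - ρ ^ 2) * y) =
      stdGaussianPlanePDF (a, y) := by
  have hvar : 0 < 1 - ρ ^ 2 := by nlinarith [hρ.1, hρ.2]
  have hs : 0 < √(1 - ρ ^ 2) := sqrt_pos.2 hvar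
  have hsq : √(1 - ρ ^ 2) ^ 2 = 1 - ρ ^ 2 := sq_sqrt hvar.le
  have hquad : a ^ 2 - 2 * ρ * a * (ρ * a + √(1 - ρ ^ 2) * y) + (ρ * a + √(1 - ρ ^ 2) * y) ^ 2 =
      (1 - ρ ^ 2) * (a ^ 2 + y ^ 2) := by
    linear_combination y ^ 2 * hsq
  rw [bivariateGaussianPDF, stdGaussianPlanePDF, hquad]
  field_simp

lemma integral_Ioi_bivariateGaussianPDF {ρ : ℝ} (hρ : ρ ∈ Ioo (-1) 1) {a : ℝ} (ha : 0 < a) :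
    ∫ b in Ioi 0, bivariateGaussianPDF ρ a b =
      ∫ y, (wedge (arcsin ρ)).indicator stdGaussianPlanePDF (a, y) := by
  have hs : 0 < √(1 - ρ ^ 2) := sqrt_pos.2 (by nlinarith [hρ.1, hρ.2])
  rw [← integral_indicator measurableSet_Ioi, ← smul_inv_smul₀ hs.ne' (∫ b, _),
    ← integral_comp_add_mul _ (ρ * a) hs, smul_eq_mul, ← integral_const_mul]
  congr 1 with y
  by_cases hy : 0 < ρ * a + √(1 - ρ ^ 2) * y
  · rw [indicator_of_mem (show _ ∈ Ioi (0 : ℝ) from hy), indicator_of_mem,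
      bivariateGaussianPDF_whiten hρ]
    simpa [wedge, sin_arcsin hρ.1.le hρ.2.le, cos_arcsin, ha] using hy
  · rw [indicator_of_notMem (show _ ∉ Ioi (0 : ℝ) from hy), indicator_of_notMem, mul_zero]
    simpa [wedge, sin_arcsin hρ.1.le hρ.2.le, cos_arcsin, ha] using hy

lemma integral_orthant_bivariateGaussianPDF {ρ : ℝ} (hρ : ρ ∈ Ioo (-1) 1) :
    ∫ a in Ioi 0, ∫ b in Ioi 0, bivariateGaussianPDF ρ a b =
      ∫ p in wedge (arcsin ρ), stdGaussianPlanePDF p := by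
  have hW := (isOpen_wedge (arcsin ρ)).measurableSet
  calc ∫ a in Ioi 0, ∫ b in Ioi 0, bivariateGaussianPDF ρ a b
      = ∫ a in Ioi 0, ∫ y, (wedge (arcsin ρ)).indicator stdGaussianPlanePDF (a, y) :=
        setIntegral_congr_fun measurableSet_Ioi fun _ ha => integral_Ioi_bivariateGaussianPDF hρ ha
    _ = ∫ a, ∫ y, (wedge (arcsin ρ)).indicator stdGaussianPlanePDF (a, y) :=
        setIntegral_eq_integral_of_forall_compl_eq_zero fun a ha =>
          integral_eq_zero_of_ae (ae_of_all _ fun y => indicator_of_notMem (fun hp => ha hp.1) _)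
    _ = ∫ p in wedge (arcsin ρ), stdGaussianPlanePDF p := by
        rw [← integral_indicator hW, Measure.volume_eq_prod,
          integral_prod _ (integrable_stdGaussianPlanePDF.indicator hW)]

/-- The orthant probability of the centered bivariate Gaussian with unit
variances and correlation `ρ` is `1/4 + arcsin(ρ)/(2π)`. -/
theorem stmt_10 (ρ : ℝ) (hρ : ρ ∈ Set.Ioo (-1 : ℝ) 1) (f : ℝ → ℝ → ℝ)
    (hf : ∀ a b, f a b = (2 * Real.pi * Real.sqrt (1 - ρ ^ 2))⁻¹ *
      Real.exp (-(a ^ 2 - 2 * ρ * a * b + b ^ 2) / (2 * (1 - ρ ^ 2)))) :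
    ∫ a in Set.Ioi (0 : ℝ), ∫ b in Set.Ioi (0 : ℝ), f a b =
      1 / 4 + Real.arcsin ρ / (2 * Real.pi) := by
  have hpdf : f = bivariateGaussianPDF ρ := funext₂ hf
  have hφ : arcsin ρ ∈ Ioo (-(π / 2)) (π / 2) :=
    ⟨neg_pi_div_two_lt_arcsin.2 hρ.1, arcsin_lt_pi_div_two.2 hρ.2⟩
  rw [hpdf, integral_orthant_bivariateGaussianPDF hρ, integral_wedge_stdGaussianPlanePDF hφ]
  field_simp
  ring

end
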